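/- arXiv:1207.7333 — 4 statements merged into one kernel-verified Lean document; each statement's English description precedes it below -/
import Mathlib

section
/- With φ as above and ζ_a = (⟨i c₁ a, a⟩, ..., ⟨i cₙ a, a⟩, |a|²) ∈ ℝ^{n,1}, and X(x) = (2x/(1-|x|²), (1+|x|²)/(1-|x|²)) the hyperboloid position vector, the identity |φ(x)|² = -2 X(x)·ζ_a holds, where · is the Lorentz inner product u·v = Σⱼ uⱼvⱼ - u₀v₀ (with last coordinates the time components). -/
/-!
The Clifford relations make `c(x) = ∑ⱼ xⱼ cⱼ` a skew-Hermitian matrix with `c(x)² = -|x|²`, so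
`|c(x) a|² = ⟨a, -c(x)² a⟩ = |x|² |a|²`. Expanding `|a - i c(x) a|²` therefore gives
`(1 + |x|²)|a|² - 2 ∑ⱼ xⱼ ⟨i cⱼ a, a⟩`, and the factor `2 / (1 - |x|²)` turns this into `-2 X(x)·ζ_a`.
-/

open ComplexConjugate Matrix

theorem clifford_sum_smul_mul_self {K A ι : Type*} [Field K] [CharZero K] [Ring A] [Algebra K A]
    [Fintype ι] [DecidableEq ι] (c : ι → A)
    (hcl : ∀ j k, c j * c k + c k * c j = if j = k then (-2 : K) • (1 : A) else 0) (x : ι → K) :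
    (∑ j, x j • c j) * (∑ j, x j • c j) = (-∑ j, x j ^ 2) • (1 : A) := by
  set S := ∑ j, x j • c j
  have hS : S * S = ∑ j, ∑ k, (x j * x k) • (c j * c k) := by
    simp only [S, Finset.sum_mul_sum, smul_mul_smul_comm]
  have hS' : S * S = ∑ j, ∑ k, (x j * x k) • (c k * c j) := by
    rw [hS, Finset.sum_comm]
    exact Finset.sum_congr rfl fun j _ => Finset.sum_congr rfl fun k _ => by rw [mul_comm]
  have h2 : (2 : K) • (S * S) = (2 : K) • ((-∑ j, x j ^ 2) • (1 : A)) := by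
    calc (2 : K) • (S * S) = ∑ j, ∑ k, (x j * x k) • (c j * c k + c k * c j) := by
          rw [two_smul]
          nth_rewrite 1 [hS]
          rw [hS']
          simp only [← Finset.sum_add_distrib, smul_add]
      _ = _ := by
          simp only [hcl, smul_ite, smul_zero, Finset.sum_ite_eq, Finset.mem_univ, if_true,
            smul_smul, ← Finset.sum_smul]
          congr 1
          rw [← Finset.sum_neg_distrib, Finset.mul_sum]
          exact Finset.sum_congr rfl fun j _ => by ring
  exact smul_right_injective A two_ne_zero h2

theorem conjTranspose_sum_ofReal_smul {ι n : Type*} [Fintype ι]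
    (c : ι → Matrix n n ℂ) (hskew : ∀ j, (c j)ᴴ = -(c j)) (x : ι → ℝ) :
    (∑ j, (x j : ℂ) • c j)ᴴ = -∑ j, (x j : ℂ) • c j := by
  simp [conjTranspose_sum, hskew, ← Finset.sum_neg_distrib]

theorem ofReal_sum_norm_sq_eq_dotProduct {n : Type*} [Fintype n] (v : n → ℂ) :
    ((∑ p, ‖v p‖ ^ 2 : ℝ) : ℂ) = star v ⬝ᵥ v := by
  push_cast
  simp [dotProduct, Complex.conj_mul']

theorem sum_norm_sq_mulVec_of_skew {n : Type*} [Fintype n] [DecidableEq n] {M : Matrix n n ℂ}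
    (hskew : Mᴴ = -M) {r : ℝ} (hsq : M * M = (-r : ℂ) • 1) (v : n → ℂ) :
    ∑ p, ‖(M *ᵥ v) p‖ ^ 2 = r * ∑ p, ‖v p‖ ^ 2 := by
  apply Complex.ofReal_injective
  rw [Complex.ofReal_mul, ofReal_sum_norm_sq_eq_dotProduct, ofReal_sum_norm_sq_eq_dotProduct,
    star_mulVec, dotProduct_mulVec, vecMul_vecMul, hskew, neg_mul, hsq, neg_smul, neg_neg,
    vecMul_smul, vecMul_one, smul_dotProduct, smul_eq_mul]

theorem norm_sub_I_mul_sq (z w : ℂ) :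
    ‖z - Complex.I * w‖ ^ 2 = ‖z‖ ^ 2 + ‖w‖ ^ 2 - 2 * (Complex.I * w * conj z).re := by
  simp only [Complex.sq_norm, Complex.normSq_apply, Complex.mul_re, Complex.mul_im,
    Complex.sub_re, Complex.sub_im, Complex.I_re, Complex.I_im, Complex.conj_re, Complex.conj_im]
  ring

theorem sum_re_I_mul_sum_smul_mulVec {ι n : Type*} [Fintype ι] [Fintype n]
    (c : ι → Matrix n n ℂ) (x : ι → ℝ) (a : n → ℂ) :
    ∑ p, (Complex.I * ((∑ j, (x j : ℂ) • c j) *ᵥ a) p * conj (a p)).re =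
      ∑ j, x j * (∑ p, Complex.I * (c j *ᵥ a) p * conj (a p)).re := by
  simp only [sum_mulVec, smul_mulVec, Finset.sum_apply, Pi.smul_apply, smul_eq_mul,
    Finset.mul_sum, Finset.sum_mul, Complex.re_sum]
  rw [Finset.sum_comm]
  refine Finset.sum_congr rfl fun j _ => Finset.sum_congr rfl fun p _ => ?_
  rw [show Complex.I * ((x j : ℂ) * (c j *ᵥ a) p) * conj (a p) =
    (x j : ℂ) * (Complex.I * (c j *ᵥ a) p * conj (a p)) by ring, Complex.re_ofReal_mul]

/-- with φ(x) = √(2/(1-|x|²))(a - i c(x)a),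
ζ_a = (⟨i c₁ a, a⟩, ..., ⟨i cₙ a, a⟩, |a|²) and X(x) the hyperboloid position vector
(2x/(1-|x|²), (1+|x|²)/(1-|x|²)), one has |φ(x)|² = -2 X(x)·ζ_a where
u·v = Σⱼ uⱼvⱼ - u₀v₀ is the Lorentz inner product. -/
theorem stmt5 (n m : ℕ) (c : Fin n → Matrix (Fin (2 ^ m)) (Fin (2 ^ m)) ℂ)
    (hskew : ∀ j, (c j)ᴴ = -(c j))
    (hcl : ∀ j k, c j * c k + c k * c j =
      if j = k then (-2 : ℂ) • (1 : Matrix (Fin (2 ^ m)) (Fin (2 ^ m)) ℂ) else 0)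
    (a : Fin (2 ^ m) → ℂ) (x : EuclideanSpace ℝ (Fin n)) (hx : ‖x‖ < 1) :
    (∑ p, ‖(Real.sqrt (2 / (1 - ‖x‖ ^ 2)) : ℂ) *
        (a p - Complex.I * ((∑ j, (x j : ℂ) • c j).mulVec a p))‖ ^ 2) =
      -2 * ((∑ j, (2 * x j / (1 - ‖x‖ ^ 2)) *
              (∑ p, Complex.I * ((c j).mulVec a p) * conj (a p)).re)
        - (1 + ‖x‖ ^ 2) / (1 - ‖x‖ ^ 2) * ∑ p, ‖a p‖ ^ 2) := by
  have hsq : (∑ j, (x j : ℂ) • c j) * (∑ j, (x j : ℂ) • c j) = (-(‖x‖ ^ 2 : ℝ) : ℂ) • 1 := by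
    rw [clifford_sum_smul_mul_self c hcl, EuclideanSpace.real_norm_sq_eq]
    push_cast
    rfl
  have hscale : ‖(Real.sqrt (2 / (1 - ‖x‖ ^ 2)) : ℂ)‖ ^ 2 = 2 / (1 - ‖x‖ ^ 2) := by
    have hden : 0 < 1 - ‖x‖ ^ 2 := by nlinarith [norm_nonneg x]
    rw [Complex.norm_real, Real.norm_eq_abs, sq_abs, Real.sq_sqrt (by positivity)]
  simp only [norm_mul, mul_pow, hscale, norm_sub_I_mul_sq, ← Finset.mul_sum,
    Finset.sum_sub_distrib, Finset.sum_add_distrib,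
    sum_norm_sq_mulVec_of_skew (conjTranspose_sum_ofReal_smul c hskew x) hsq a,
    sum_re_I_mul_sum_smul_mulVec c x a, mul_div_right_comm _ _ (1 - ‖x‖ ^ 2),
    mul_assoc _ (x _), ← Finset.mul_sum]
  ring
end

section
/- Suppose {cⱼ}ⱼ₌₁^{2m-1} are Clifford matrices on ℂ^{2^{m-1}} such that for every y ∈ S^{2m-2} there is a unit b ∈ ℂ^{2^{m-1}} with yⱼ = ⟨i cⱼ b, b⟩ for all j, and define on ℂ^{2^m} = ℂ² ⊗ ℂ^{2^{m-1}} the matrices dⱼ = I ⊗ cⱼ for j ≤ 2m-2, d_{2m-1} = -i g₁ ⊗ c_{2m-1}, d_{2m} = -i g₂ ⊗ c_{2m-1}, d_{2m+1} = T ⊗ c_{2m-1}. Then for every X ∈ S^{2m} there is a unit vector v ∈ ℂ^{2^m} with Xⱼ = ⟨i dⱼ v, v⟩ for all j = 1, ..., 2m+1. -/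
/-!
Split `X ∈ S^{2m}` as `(y', x)` with `x ∈ ℝ³` and put `r = ‖x‖`. The vector `(y', r)` lies on
`S^{2m-2}`, so the hypothesis gives a unit `b` realizing it through the `cⱼ`. The Hopf-type map
`a ↦ (⟨-i g₁ a, a⟩, ⟨-i g₂ a, a⟩, ⟨T a, a⟩)` sends the unit sphere of `ℂ²` onto `S²`, so there is
a unit `a` whose image, multiplied by `r`, is `x`. Then `v = a ⊗ b` works, because
`⟨i (A ⊗ c) (a ⊗ b), a ⊗ b⟩ = ⟨A a, a⟩ ⟨i c b, b⟩` and `⟨i c_{2m-1} b, b⟩ = r`.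
-/

open ComplexConjugate Matrix Kronecker Complex Finset

section Kronecker

variable {ι κ : Type*} [Fintype ι] [Fintype κ]

def hermForm (M : Matrix ι ι ℂ) (v : ι → ℂ) : ℂ := ∑ i, (M *ᵥ v) i * conj (v i)

theorem hermForm_one [DecidableEq ι] (v : ι → ℂ) : hermForm 1 v = ((∑ i, ‖v i‖ ^ 2 : ℝ) : ℂ) := by
  simp [hermForm, one_mulVec, mul_conj, Complex.normSq_eq_norm_sq]

theorem kroneckerMap_mulVec_mul (A : Matrix ι ι ℂ) (B : Matrix κ κ ℂ) (a : ι → ℂ) (b : κ → ℂ)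
    (p : ι × κ) : ((A ⊗ₖ B) *ᵥ fun q => a q.1 * b q.2) p = (A *ᵥ a) p.1 * (B *ᵥ b) p.2 := by
  simp only [mulVec, dotProduct, Fintype.sum_prod_type, kroneckerMap_apply, sum_mul_sum]
  exact sum_congr rfl fun _ _ => sum_congr rfl fun _ _ => by ring

theorem sum_I_mul_kroneckerMap_mulVec (A : Matrix ι ι ℂ) (B : Matrix κ κ ℂ) (a : ι → ℂ)
    (b : κ → ℂ) :
    ∑ p : ι × κ, I * ((A ⊗ₖ B) *ᵥ fun q => a q.1 * b q.2) p * conj (a p.1 * b p.2) =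
      hermForm A a * ∑ q, I * (B *ᵥ b) q * conj (b q) := by
  simp only [hermForm, kroneckerMap_mulVec_mul, sum_mul_sum, Fintype.sum_prod_type, map_mul]
  exact sum_congr rfl fun _ _ => sum_congr rfl fun _ _ => by ring

theorem sum_norm_sq_mul (a : ι → ℂ) (b : κ → ℂ) :
    ∑ p : ι × κ, ‖a p.1 * b p.2‖ ^ 2 = (∑ i, ‖a i‖ ^ 2) * ∑ q, ‖b q‖ ^ 2 := by
  simp only [norm_mul, mul_pow, sum_mul_sum, Fintype.sum_prod_type]

theorem exists_real_hopf_preimage (r x₁ x₂ x₃ : ℝ) (hr : 0 ≤ r)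
    (hsq : r ^ 2 = x₁ ^ 2 + x₂ ^ 2 + x₃ ^ 2) :
    ∃ α β γ : ℝ, α ^ 2 + β ^ 2 + γ ^ 2 = 1 ∧ r * (α ^ 2 - β ^ 2 - γ ^ 2) = x₁ ∧
      2 * r * α * β = x₂ ∧ 2 * r * α * γ = x₃ := by
  have hx₁ : 0 ≤ r + x₁ := by nlinarith [sq_nonneg x₂, sq_nonneg x₃, sq_nonneg (r - x₁)]
  rcases hx₁.eq_or_lt with h | h
  · have h₂ : x₂ = 0 := by nlinarith [sq_nonneg x₂, sq_nonneg x₃]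
    have h₃ : x₃ = 0 := by nlinarith [sq_nonneg x₂, sq_nonneg x₃]
    exact ⟨0, 1, 0, by ring, by linarith, by simp [h₂], by simp [h₃]⟩
  have hr : 0 < r := by nlinarith [sq_nonneg x₂, sq_nonneg x₃]
  set α := √((r + x₁) / (2 * r))
  have hα : α ^ 2 * (2 * r) = r + x₁ := by
    rw [Real.sq_sqrt (by positivity)]; field_simp
  have hα₀ : 0 < α := Real.sqrt_pos.mpr (by positivity)
  refine ⟨α, x₂ / (2 * r * α), x₃ / (2 * r * α), ?_, ?_, by field_simp, by field_simp⟩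
  · field_simp
    nlinarith [hα]
  · field_simp
    linear_combination (2 * r * α ^ 2 + r - x₁) * hα + hsq

local notation "g₁" => (!![Complex.I, 0; 0, -Complex.I] : Matrix (Fin 2) (Fin 2) ℂ)
local notation "g₂" => (!![0, Complex.I; Complex.I, 0] : Matrix (Fin 2) (Fin 2) ℂ)
local notation "T" => (!![0, -Complex.I; Complex.I, 0] : Matrix (Fin 2) (Fin 2) ℂ)

theorem exists_unit_hermForm_eq (r x₁ x₂ x₃ : ℝ) (hr : 0 ≤ r)
    (hsq : r ^ 2 = x₁ ^ 2 + x₂ ^ 2 + x₃ ^ 2) :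
    ∃ a : Fin 2 → ℂ, ∑ i, ‖a i‖ ^ 2 = 1 ∧ (x₁ : ℂ) = hermForm (-I • g₁) a * r ∧
      (x₂ : ℂ) = hermForm (-I • g₂) a * r ∧ (x₃ : ℂ) = hermForm T a * r := by
  obtain ⟨α, β, γ, hn, h₁, h₂, h₃⟩ := exists_real_hopf_preimage r x₁ x₂ x₃ hr hsq
  refine ⟨![α, β + γ * I], ?_, ?_, ?_, ?_⟩
  · simp only [Fin.sum_univ_two, Complex.sq_norm, cons_val_zero, cons_val_one, cons_val_fin_one,
      normSq_ofReal, normSq_add_mul_I]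
    linarith
  all_goals
    subst h₁ h₂ h₃
    simp only [hermForm, mulVec, dotProduct, Fin.sum_univ_two, Matrix.smul_apply, of_apply,
      cons_val', cons_val_zero, cons_val_one, cons_val_fin_one, smul_eq_mul, neg_mul, mul_neg,
      neg_neg, neg_zero, neg_add_rev, sum_neg_distrib, I_mul_I, mul_zero, zero_mul, one_mul,
      add_zero, zero_add, map_add, map_mul, conj_ofReal, conj_I, ofReal_mul, ofReal_sub,
      ofReal_pow, ofReal_ofNat]
  · linear_combination (-(r * γ ^ 2) : ℂ) * I_sq
  · ring
  · linear_combination (2 * r * α * γ : ℂ) * I_sq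

theorem sum_Icc_one_two_mul_sub_one {M : Type*} [AddCommMonoid M] {m : ℕ} (hm : 1 ≤ m)
    (f : ℕ → M) : ∑ j ∈ Icc 1 (2 * m - 1), f j = ∑ j ∈ Icc 1 (2 * m - 2), f j + f (2 * m - 1) := by
  obtain ⟨k, rfl⟩ := Nat.exists_eq_add_of_le' hm
  rw [show 2 * (k + 1) - 1 = 2 * k + 1 by omega, show 2 * (k + 1) - 2 = 2 * k by omega,
    sum_Icc_succ_top (by omega)]

theorem sum_Icc_one_two_mul_add_one {M : Type*} [AddCommMonoid M] {m : ℕ} (hm : 1 ≤ m)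
    (f : ℕ → M) :
    ∑ j ∈ Icc 1 (2 * m + 1), f j = ∑ j ∈ Icc 1 (2 * m - 1), f j + f (2 * m) + f (2 * m + 1) := by
  obtain ⟨k, rfl⟩ := Nat.exists_eq_add_of_le' hm
  rw [sum_Icc_succ_top (by omega), show 2 * (k + 1) = 2 * k + 1 + 1 by ring,
    sum_Icc_succ_top (by omega), show 2 * k + 1 + 1 - 1 = 2 * k + 1 by omega]

/-- the odd-dimensional induction step. If every y ∈ S^{2m-2} is realized
as (⟨i cⱼ b, b⟩)ⱼ for some unit b ∈ ℂ^{2^{m-1}}, and dⱼ are defined on ℂ² ⊗ ℂ^{2^{m-1}}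
by dⱼ = I ⊗ cⱼ (j ≤ 2m-2), d_{2m-1} = -i g₁ ⊗ c_{2m-1}, d_{2m} = -i g₂ ⊗ c_{2m-1},
d_{2m+1} = T ⊗ c_{2m-1}, then every X ∈ S^{2m} is realized as (⟨i dⱼ v, v⟩)ⱼ
for some unit v ∈ ℂ^{2^m}. -/
theorem stmt6 (m : ℕ) (hm : 1 ≤ m)
    (c : ℕ → Matrix (Fin (2 ^ (m - 1))) (Fin (2 ^ (m - 1))) ℂ)
    (d : ℕ → Matrix (Fin 2 × Fin (2 ^ (m - 1))) (Fin 2 × Fin (2 ^ (m - 1))) ℂ)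
    (hsurj : ∀ y : ℕ → ℝ, (∑ j ∈ Finset.Icc 1 (2 * m - 1), (y j) ^ 2) = 1 →
      ∃ b : Fin (2 ^ (m - 1)) → ℂ, (∑ p, ‖b p‖ ^ 2) = 1 ∧
        ∀ j ∈ Finset.Icc 1 (2 * m - 1),
          (y j : ℂ) = ∑ p, Complex.I * ((c j).mulVec b p) * conj (b p))
    (hdlow : ∀ j, 1 ≤ j → j ≤ 2 * m - 2 →
      d j = (1 : Matrix (Fin 2) (Fin 2) ℂ) ⊗ₖ c j)
    (hd1 : d (2 * m - 1) =
      ((-Complex.I) • (!![Complex.I, 0; 0, -Complex.I] : Matrix (Fin 2) (Fin 2) ℂ)) ⊗ₖ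
        c (2 * m - 1))
    (hd2 : d (2 * m) =
      ((-Complex.I) • (!![0, Complex.I; Complex.I, 0] : Matrix (Fin 2) (Fin 2) ℂ)) ⊗ₖ
        c (2 * m - 1))
    (hd3 : d (2 * m + 1) =
      (!![0, -Complex.I; Complex.I, 0] : Matrix (Fin 2) (Fin 2) ℂ) ⊗ₖ c (2 * m - 1)) :
    ∀ X : ℕ → ℝ, (∑ j ∈ Finset.Icc 1 (2 * m + 1), (X j) ^ 2) = 1 →
      ∃ v : Fin 2 × Fin (2 ^ (m - 1)) → ℂ, (∑ p, ‖v p‖ ^ 2) = 1 ∧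
        ∀ j ∈ Finset.Icc 1 (2 * m + 1),
          (X j : ℂ) = ∑ p, Complex.I * ((d j).mulVec v p) * conj (v p) := by
  intro X hX
  set r := √(X (2 * m - 1) ^ 2 + X (2 * m) ^ 2 + X (2 * m + 1) ^ 2)
  have hr : r ^ 2 = X (2 * m - 1) ^ 2 + X (2 * m) ^ 2 + X (2 * m + 1) ^ 2 :=
    Real.sq_sqrt (by positivity)
  have hy : ∑ j ∈ Icc 1 (2 * m - 1), Function.update X (2 * m - 1) r j ^ 2 = 1 := by
    rw [sum_Icc_one_two_mul_add_one hm, sum_Icc_one_two_mul_sub_one hm] at hX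
    rw [sum_Icc_one_two_mul_sub_one hm, Function.update_self, hr, ← hX]
    have hlow : ∀ j ∈ Icc 1 (2 * m - 2), Function.update X (2 * m - 1) r j ^ 2 = X j ^ 2 :=
      fun j hj => by rw [Function.update_of_ne (by rw [mem_Icc] at hj; omega)]
    rw [sum_congr rfl hlow]
    ring
  obtain ⟨b, hb, hcb⟩ := hsurj _ hy
  have hcr : (r : ℂ) = ∑ p, I * (c (2 * m - 1) *ᵥ b) p * conj (b p) := by
    simpa using hcb (2 * m - 1) (mem_Icc.2 (by omega))
  obtain ⟨a, ha, h₁, h₂, h₃⟩ := exists_unit_hermForm_eq r _ _ _ (Real.sqrt_nonneg _) hr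
  refine ⟨fun p => a p.1 * b p.2, by rw [sum_norm_sq_mul, ha, hb, one_mul], fun j hj => ?_⟩
  rw [mem_Icc] at hj
  obtain hlow | rfl | rfl | rfl : j ≤ 2 * m - 2 ∨ j = 2 * m - 1 ∨ j = 2 * m ∨ j = 2 * m + 1 := by
    omega
  · rw [hdlow j hj.1 hlow, sum_I_mul_kroneckerMap_mulVec, hermForm_one, ha, ofReal_one, one_mul,
      ← hcb j (mem_Icc.2 (by omega)), Function.update_of_ne (by omega)]
  · rwa [hd1, sum_I_mul_kroneckerMap_mulVec, ← hcr]
  · rwa [hd2, sum_I_mul_kroneckerMap_mulVec, ← hcr]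
  · rwa [hd3, sum_I_mul_kroneckerMap_mulVec, ← hcr]
end Kronecker
end

section
/- For every future-directed null vector ζ ∈ ℝ^{n,1} (n ≥ 2), there exists a ∈ ℂ^{2^m}, m = ⌊n/2⌋, such that ζ = ζ_a := Σⱼ₌₁ⁿ ⟨i cⱼ a, a⟩ eⱼ + |a|² e₀, where cⱼ are the standard Clifford matrices on ℂ^{2^m}. -/
/-!
Put `Aⱼ = i cⱼ`: these are Hermitian with `Aⱼ Aₖ + Aₖ Aⱼ = 2 δⱼₖ`, so `M = Σ ζⱼ Aⱼ` is Hermitian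
with `M² = ζ₀²`, and `M` is traceless because each `Aⱼ` anticommutes with an involution `Aₖ`.
Hence `M ≠ -ζ₀`, and a nonzero column of `M + ζ₀` is a `ζ₀`-eigenvector `v`. Pairing
`Aⱼ M + M Aⱼ = 2 ζⱼ` with `v` gives `ζ₀ ⟨v, Aⱼ v⟩ = ζⱼ |v|²`, so the multiple `a` of `v` with
`|a|² = ζ₀` has `⟨a, Aⱼ a⟩ = ζⱼ`.
-/

open ComplexConjugate Matrix

section CliffordRelations

variable {κ K R : Type*} [DecidableEq κ] [Field K] [Ring R] [Algebra K R] {e : κ → R}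

theorem mul_self_eq_one_of_clifford [CharZero K]
    (he : ∀ j k, e j * e k + e k * e j = if j = k then (2 : K) • 1 else 0) (k : κ) :
    e k * e k = 1 := by
  have h := he k k
  rw [if_pos rfl, ← two_smul K] at h
  exact smul_right_injective _ two_ne_zero h

variable [Fintype κ]

theorem anticomm_sum_smul_of_clifford
    (he : ∀ j k, e j * e k + e k * e j = if j = k then (2 : K) • 1 else 0) (x : κ → K) (k : κ) :
    e k * (∑ j, x j • e j) + (∑ j, x j • e j) * e k = (2 * x k) • 1 := by
  simp_rw [Finset.mul_sum, Finset.sum_mul, ← Finset.sum_add_distrib, mul_smul_comm,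
    smul_mul_assoc, ← smul_add, he, smul_ite, smul_zero, smul_smul, mul_comm (x _),
    Finset.sum_ite_eq, Finset.mem_univ, if_true]

theorem sum_smul_mul_self_of_clifford [CharZero K]
    (he : ∀ j k, e j * e k + e k * e j = if j = k then (2 : K) • 1 else 0) (x : κ → K) :
    (∑ j, x j • e j) * (∑ j, x j • e j) = (∑ j, x j ^ 2) • 1 := by
  have hanti := anticomm_sum_smul_of_clifford he x
  set M := ∑ j, x j • e j
  have h2 : (2 : K) • (M * M) = (2 : K) • ((∑ j, x j ^ 2) • 1) := by
    calc (2 : K) • (M * M) = ∑ j, x j • (e j * M + M * e j) := by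
          have hl : M * M = ∑ j, x j • (e j * M) := by
            simp_rw [← smul_mul_assoc]; exact Finset.sum_mul _ _ _
          have hr : M * M = ∑ j, x j • (M * e j) := by
            simp_rw [← mul_smul_comm]; exact Finset.mul_sum _ _ _
          simp_rw [smul_add, Finset.sum_add_distrib, ← hl, ← hr, two_smul]
      _ = (2 : K) • ((∑ j, x j ^ 2) • 1) := by
          simp_rw [hanti, smul_smul, ← Finset.sum_smul, Finset.mul_sum]
          congr 1
          exact Finset.sum_congr rfl fun j _ => by ring
  exact smul_right_injective _ two_ne_zero h2

end CliffordRelations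

namespace Matrix

variable {ι κ : Type*} [Fintype ι]

theorem star_dotProduct_self_eq_sum_norm_sq {𝕜 : Type*} [RCLike 𝕜] (v : ι → 𝕜) :
    star v ⬝ᵥ v = ((∑ p, ‖v p‖ ^ 2 : ℝ) : 𝕜) := by
  simp [dotProduct, RCLike.conj_mul]

theorem exists_sum_norm_sq_smul_eq {𝕜 : Type*} [RCLike 𝕜] {v : ι → 𝕜} (hv : v ≠ 0) {r : ℝ}
    (hr : 0 ≤ r) : ∃ c : 𝕜, ∑ p, ‖(c • v) p‖ ^ 2 = r := by
  have hs : 0 < ∑ p, ‖v p‖ ^ 2 := by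
    obtain ⟨p, hp⟩ := Function.ne_iff.1 hv
    exact Finset.sum_pos' (fun _ _ => by positivity) ⟨p, Finset.mem_univ _, by positivity⟩
  refine ⟨(Real.sqrt (r / ∑ p, ‖v p‖ ^ 2) : 𝕜), ?_⟩
  simp_rw [Pi.smul_apply, smul_eq_mul, norm_mul, mul_pow, ← Finset.mul_sum, RCLike.norm_ofReal,
    sq_abs, Real.sq_sqrt (div_nonneg hr hs.le)]
  field_simp

variable [DecidableEq ι]

theorem trace_eq_zero_of_anticomm {K : Type*} [Field K] [CharZero K] {x e : Matrix ι ι K}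
    (he : e * e = 1) (hxe : e * x + x * e = 0) : x.trace = 0 := by
  have hconj : e * x * e = -x := by
    rw [eq_neg_of_add_eq_zero_left hxe, neg_mul, mul_assoc, he, mul_one]
  have h : x.trace = -x.trace := by
    rw [← trace_neg, ← hconj, mul_assoc, trace_mul_comm, mul_assoc, he, mul_one]
  linear_combination (1 / 2 : K) * h

theorem exists_mulVec_eq_smul_of_mul_self_eq {R : Type*} [CommRing R] {M : Matrix ι ι R} {t : R}
    (hM : M * M = t ^ 2 • 1) (hne : M ≠ -t • 1) : ∃ v ≠ 0, M *ᵥ v = t • v := by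
  have hB : M + t • 1 ≠ 0 := fun h => hne (by rw [neg_smul, eq_neg_of_add_eq_zero_left h])
  obtain ⟨w, hw⟩ : ∃ w, (M + t • 1) *ᵥ w ≠ 0 := by
    simpa [ext_iff_mulVec] using hB
  refine ⟨(M + t • 1) *ᵥ w, hw, ?_⟩
  have key : M * (M + t • 1) = t • (M + t • 1) := by
    rw [mul_add, hM, mul_smul_comm, mul_one, smul_add, smul_smul, sq, add_comm]
  rw [mulVec_mulVec, key, smul_mulVec]

theorem ne_smul_one_of_trace_eq_zero {K : Type*} [Field K] [CharZero K] [Nonempty ι]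
    {M : Matrix ι ι K} (hM : M.trace = 0) {t : K} (ht : t ≠ 0) : M ≠ t • 1 := by
  rintro rfl
  simp [trace_smul, ht] at hM

variable {𝕜 : Type*} [RCLike 𝕜]

theorem IsHermitian.mul_star_dotProduct_mulVec_of_anticomm {M A : Matrix ι ι 𝕜}
    (hM : M.IsHermitian) {v : ι → 𝕜} {t : ℝ} (hv : M *ᵥ v = (t : 𝕜) • v) {s : 𝕜}
    (hA : A * M + M * A = (2 * s) • 1) :
    t * (star v ⬝ᵥ A *ᵥ v) = s * (star v ⬝ᵥ v) := by
  have hvM : star v ᵥ* M = (t : 𝕜) • star v := by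
    rw [← hM.eq, ← star_mulVec, hv, star_smul, RCLike.star_def, RCLike.conj_ofReal]
  have h := congrArg (star v ⬝ᵥ · *ᵥ v) hA
  simp only [add_mulVec, ← mulVec_mulVec, dotProduct_add, hv, mulVec_smul, dotProduct_smul,
    dotProduct_mulVec (star v) M, hvM, smul_dotProduct, smul_mulVec,
    one_mulVec, smul_eq_mul] at h
  linear_combination h / 2

theorem exists_star_dotProduct_mulVec_eq_of_clifford [DecidableEq κ] [Fintype κ] [Nontrivial κ]
    [Nonempty ι] {A : κ → Matrix ι ι 𝕜}
    (hA : ∀ j k, A j * A k + A k * A j = if j = k then (2 : 𝕜) • 1 else 0)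
    (hherm : ∀ j, (A j).IsHermitian) (x : κ → ℝ) (t : ℝ) (hnull : ∑ j, x j ^ 2 = t ^ 2)
    (ht : 0 < t) :
    ∃ v : ι → 𝕜, (∀ j, star v ⬝ᵥ A j *ᵥ v = x j) ∧ ∑ p, ‖v p‖ ^ 2 = t := by
  set M := ∑ j, (x j : 𝕜) • A j
  have hMherm : M.IsHermitian :=
    isSelfAdjoint_sum _ fun j _ => (hherm j).smul (RCLike.conj_ofReal (x j))
  have hMsq : M * M = (t : 𝕜) ^ 2 • 1 := by
    rw [sum_smul_mul_self_of_clifford hA]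
    exact_mod_cast congrArg (fun r : ℝ => (r : 𝕜) • (1 : Matrix ι ι 𝕜)) hnull
  have hMtr : M.trace = 0 := by
    refine (trace_sum _ _).trans (Finset.sum_eq_zero fun j _ => ?_)
    obtain ⟨k, hkj⟩ := exists_ne j
    rw [trace_smul, trace_eq_zero_of_anticomm (mul_self_eq_one_of_clifford hA k)
      (by simpa [hkj] using hA k j), smul_zero]
  have ht' : (t : 𝕜) ≠ 0 := RCLike.ofReal_ne_zero.2 ht.ne'
  obtain ⟨v, hv0, hv⟩ := exists_mulVec_eq_smul_of_mul_self_eq hMsq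
    (ne_smul_one_of_trace_eq_zero hMtr (neg_ne_zero.2 ht'))
  obtain ⟨c, hc⟩ := exists_sum_norm_sq_smul_eq hv0 ht.le
  refine ⟨c • v, fun j => mul_left_cancel₀ ht' ?_, hc⟩
  have hcv : M *ᵥ (c • v) = (t : 𝕜) • (c • v) := by rw [mulVec_smul, hv, smul_comm]
  rw [hMherm.mul_star_dotProduct_mulVec_of_anticomm hcv (anticomm_sum_smul_of_clifford hA _ j),
    star_dotProduct_self_eq_sum_norm_sq, hc, mul_comm]

end Matrix

/-- every future-directed null vector ζ = (ζ₁,...,ζₙ,ζ₀) ∈ ℝ^{n,1}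
(n ≥ 2) equals ζ_a = Σⱼ ⟨i cⱼ a, a⟩ eⱼ + |a|² e₀ for some a ∈ ℂ^{2^m}, m = ⌊n/2⌋,
where the cⱼ are (skew-Hermitian) Clifford matrices on ℂ^{2^m}. -/
theorem stmt7 (n : ℕ) (hn : 2 ≤ n)
    (c : Fin n → Matrix (Fin (2 ^ (n / 2))) (Fin (2 ^ (n / 2))) ℂ)
    (hskew : ∀ j, (c j)ᴴ = -(c j))
    (hcl : ∀ j k, c j * c k + c k * c j =
      if j = k then (-2 : ℂ) • (1 : Matrix (Fin (2 ^ (n / 2))) (Fin (2 ^ (n / 2))) ℂ) else 0)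
    (ζ : Fin n → ℝ) (ζ₀ : ℝ) (hnull : ∑ j, (ζ j) ^ 2 = ζ₀ ^ 2) (hfut : 0 < ζ₀) :
    ∃ a : Fin (2 ^ (n / 2)) → ℂ,
      (∀ j, (ζ j : ℂ) = ∑ p, Complex.I * ((c j).mulVec a p) * conj (a p)) ∧
      ζ₀ = ∑ p, ‖a p‖ ^ 2 := by
  have : Nontrivial (Fin n) := Fin.nontrivial_iff_two_le.2 hn
  have hA : ∀ j k, (Complex.I • c j) * (Complex.I • c k) + (Complex.I • c k) * (Complex.I • c j) =
      if j = k then (2 : ℂ) • 1 else 0 := by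
    intro j k
    simp only [smul_mul_smul_comm, Complex.I_mul_I, ← smul_add, hcl, smul_ite, smul_zero,
      smul_smul]
    norm_num
  have hherm : ∀ j, (Complex.I • c j).IsHermitian := fun j => by
    simp [IsHermitian, conjTranspose_smul, hskew]
  obtain ⟨a, ha, hnorm⟩ := exists_star_dotProduct_mulVec_eq_of_clifford hA hherm ζ ζ₀ hnull hfut
  refine ⟨a, fun j => ?_, hnorm.symm⟩
  refine (ha j).symm.trans (Finset.sum_congr rfl fun p _ => ?_)
  simp only [smul_mulVec, Pi.smul_apply, smul_eq_mul, Pi.star_apply, RCLike.star_def]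
  ring
end

section
/- Let k, r, R₁ > 0 with r > R₁, let α = coth(kR₁) + μ and μ = (1/sinh(kR₁))·((sinh²(kR₂)/sinh²(kR₁)) - 1)^{1/2} with R₂ ≥ R₁. Suppose φ, r are differentiable functions of ρ with |φ| ≤ 1, ∂r/∂ρ > 0, and |∂φ/∂ρ| ≤ μ k ∂r/∂ρ. Then φ cosh(kr) ∂r/∂ρ + (1/k) sinh(kr) ∂φ/∂ρ - α sinh(kr) ∂r/∂ρ < 0. -/
/-!
Bounding `φ ≤ 1` and `dφ ≤ μ k dr` turns the two `μ`-terms into `± μ sinh (k r) dr`, which cancel,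
leaving `(cosh (k r) - coth (k R₁) sinh (k r)) dr`. Multiplied by `sinh (k R₁) > 0` the bracket is
`sinh (k R₁ - k r) < 0`.
-/

open Real

theorem Real.cosh_sub_coth_mul_sinh_neg {a b : ℝ} (ha : 0 < a) (hab : a < b) :
    cosh b - cosh a / sinh a * sinh b < 0 := by
  have hsa : 0 < sinh a := sinh_pos_iff.mpr ha
  have hsub : sinh (a - b) < 0 := sinh_neg_iff.mpr (sub_neg.mpr hab)
  have hmul : sinh a * (cosh b - cosh a / sinh a * sinh b) = sinh (a - b) := by
    rw [sinh_sub]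
    field_simp
  exact neg_of_mul_neg_right (hmul ▸ hsub) hsa.le

theorem stmt11_general (k R₁ r φ dr dφ : ℝ) (hk : 0 < k) (hR₁ : 0 < R₁)
    (hr : R₁ < r) (hφ : |φ| ≤ 1) (hdr : 0 < dr)
    (μ : ℝ)
    (α : ℝ) (hα : α = cosh (k * R₁) / sinh (k * R₁) + μ)
    (hdφ : |dφ| ≤ μ * k * dr) :
    φ * cosh (k * r) * dr + (1 / k) * sinh (k * r) * dφ - α * sinh (k * r) * dr < 0 := by
  have hs : 0 < sinh (k * r) := sinh_pos_iff.mpr (mul_pos hk (hR₁.trans hr))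
  have hφc : φ * cosh (k * r) ≤ cosh (k * r) :=
    mul_le_of_le_one_left (cosh_pos _).le (abs_le.mp hφ).2
  have hdφs : 1 / k * sinh (k * r) * dφ ≤ 1 / k * sinh (k * r) * (μ * k * dr) :=
    mul_le_mul_of_nonneg_left ((le_abs_self dφ).trans hdφ) (by positivity)
  have hbracket := cosh_sub_coth_mul_sinh_neg (mul_pos hk hR₁) (mul_lt_mul_of_pos_left hr hk)
  calc φ * cosh (k * r) * dr + 1 / k * sinh (k * r) * dφ - α * sinh (k * r) * dr
      ≤ cosh (k * r) * dr + 1 / k * sinh (k * r) * (μ * k * dr) - α * sinh (k * r) * dr := by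
        gcongr
    _ = (cosh (k * r) - cosh (k * R₁) / sinh (k * R₁) * sinh (k * r)) * dr := by
        rw [hα]
        field_simp
        ring
    _ < 0 := mul_neg_of_neg_of_pos hbracket hdr

/-- with α = coth(kR₁) + μ, μ = (1/sinh(kR₁))·√(sinh²(kR₂)/sinh²(kR₁) - 1),
r > R₁ > 0, |φ| ≤ 1, ∂r/∂ρ > 0 and |∂φ/∂ρ| ≤ μk ∂r/∂ρ, one has
φ cosh(kr) ∂r/∂ρ + (1/k) sinh(kr) ∂φ/∂ρ - α sinh(kr) ∂r/∂ρ < 0. -/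
theorem stmt11 (k R₁ R₂ r φ dr dφ : ℝ) (hk : 0 < k) (hR₁ : 0 < R₁) (hR₂ : R₁ ≤ R₂)
    (hr : R₁ < r) (hφ : |φ| ≤ 1) (hdr : 0 < dr)
    (μ : ℝ) (hμ : μ = (1 / sinh (k * R₁)) * Real.sqrt (sinh (k * R₂) ^ 2 / sinh (k * R₁) ^ 2 - 1))
    (α : ℝ) (hα : α = cosh (k * R₁) / sinh (k * R₁) + μ)
    (hdφ : |dφ| ≤ μ * k * dr) :
    φ * cosh (k * r) * dr + (1 / k) * sinh (k * r) * dφ - α * sinh (k * r) * dr < 0 :=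
  stmt11_general k R₁ r φ dr dφ hk hR₁ hr hφ hdr μ α hα hdφ
end
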